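/- For every real α with 1 < α < 2 and every complex number λ: F_α(λ) = (1/(1+α)) Σ_{n=0}^∞ ((−1)^n/n!) λ^n Γ((n+1)/(α+1)) · exp( iπ(2−α)(n+1)/(2(α+1)) ) · (1+α)^{(n+1)/(α+1)}, the series converging for every λ ∈ ℂ. -/

import Mathlib

open scoped Real BigOperators
open MeasureTheory

/-- `F_α(λ) = ∫_0^∞ e^{−λt} exp(e^{iπα/2} t^{1+α}/(1+α)) dt`. -/
noncomputable def Fa (α : ℝ) (l : ℂ) : ℂ :=
  ∫ t in Set.Ioi (0 : ℝ),
    Complex.exp (-l * t) *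
      Complex.exp (Complex.exp (Complex.I * Real.pi * α / 2) *
        ((t ^ (1 + α) : ℝ) : ℂ) / (1 + α))

/-!
Write the kernel as `exp(-w t^{1+α})` with `w = -e^{iπα/2}/(1+α) = e^{i(α-2)π/2}/(1+α)`, which has
positive real part. Expanding `e^{-λt}` in its Taylor series, the expansion may be integrated
termwise because `e^{|λ|t} e^{-(Re w) t^{1+α}}` is integrable. The `n`-th term is the Mellin
transform `∫ t^n e^{-w t^{1+α}} dt = Γ(q) w^{-q} / (1+α)`, `q = (n+1)/(1+α)`, which the substitution
`u = t^{1+α}` reduces to `∫ u^{q-1} e^{-wu} du = w^{-q} Γ(q)`; the latter holds for real `w > 0` by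
scaling and extends to `Re w > 0` by analytic continuation in `w`. Finally, `w^{-q}` is read off
from the polar form of `w`: `w^{-q} = (1+α)^q e^{iπ(2-α)q/2}`.
-/

open scoped Nat
open Set Complex Filter Topology

section MellinCexp

variable {s : ℂ}

lemma norm_cpow_smul_cexp_neg_mul {t : ℝ} (ht : 0 < t) (s w : ℂ) :
    ‖(t : ℂ) ^ s • cexp (-(w * t))‖ = t ^ s.re * Real.exp (-w.re * t) := by
  rw [smul_eq_mul, norm_mul, norm_cpow_eq_rpow_re_of_pos ht, norm_exp]
  simp

lemma integrableOn_rpow_mul_exp_neg_mul {a b : ℝ} (ha : -1 < a) (hb : 0 < b) :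
    IntegrableOn (fun t : ℝ => t ^ a * Real.exp (-b * t)) (Ioi 0) := by
  simpa using integrableOn_rpow_mul_exp_neg_mul_rpow ha one_pos hb

lemma mellinConvergent_cexp_neg_mul (hs : 0 < s.re) {w : ℂ} (hw : 0 < w.re) :
    MellinConvergent (fun t : ℝ => cexp (-(w * t))) s := by
  refine (integrableOn_rpow_mul_exp_neg_mul (a := s.re - 1) (by linarith) hw).mono'
    (by fun_prop) ?_
  filter_upwards [ae_restrict_mem measurableSet_Ioi] with t ht
  rw [norm_cpow_smul_cexp_neg_mul ht, sub_re, one_re]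

lemma differentiableAt_mellin_cexp_neg_mul (hs : 0 < s.re) {w₀ : ℂ} (hw₀ : 0 < w₀.re) :
    DifferentiableAt ℂ (fun w : ℂ => mellin (fun t : ℝ => cexp (-(w * t))) s) w₀ := by
  have hδ : 0 < w₀.re / 2 := half_pos hw₀
  have hre : ∀ w ∈ Metric.ball w₀ (w₀.re / 2), w₀.re / 2 ≤ w.re := fun w hw => by
    have := (abs_le.mp ((abs_re_le_norm (w - w₀)).trans (mem_ball_iff_norm.mp hw).le)).1
    rw [sub_re] at this
    linarith
  refine (hasDerivAt_integral_of_dominated_loc_of_deriv_le (μ := volume.restrict (Ioi 0))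
    (F := fun w t => (t : ℂ) ^ (s - 1) • cexp (-(w * t)))
    (F' := fun w t => -((t : ℂ) ^ s • cexp (-(w * t))))
    (bound := fun t => t ^ s.re * Real.exp (-(w₀.re / 2) * t))
    (Metric.ball_mem_nhds w₀ hδ) (.of_forall fun w => by fun_prop)
    (mellinConvergent_cexp_neg_mul hs hw₀) (by fun_prop) ?_
    (integrableOn_rpow_mul_exp_neg_mul (by linarith) hδ) ?_).2.differentiableAt
  · filter_upwards [ae_restrict_mem measurableSet_Ioi] with t (ht : 0 < t) w hw
    rw [norm_neg, norm_cpow_smul_cexp_neg_mul ht]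
    gcongr
    nlinarith [hre w hw]
  · filter_upwards [ae_restrict_mem measurableSet_Ioi] with t (ht : 0 < t) w _
    have ht0 : (t : ℂ) ≠ 0 := ofReal_ne_zero.mpr ht.ne'
    refine ((((hasDerivAt_id w).mul_const (t : ℂ)).neg.cexp).const_mul
      ((t : ℂ) ^ (s - 1))).congr_deriv ?_
    rw [smul_eq_mul, cpow_sub _ _ ht0, cpow_one]
    field_simp
    simp

lemma mellin_cexp_neg_ofReal_mul (hs : 0 < s.re) {r : ℝ} (hr : 0 < r) :
    mellin (fun t : ℝ => cexp (-(r * t))) s = (r : ℂ) ^ (-s) * Gamma s := by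
  have := mellin_comp_mul_left (fun t : ℝ => cexp (-t)) s hr
  simp only [ofReal_mul] at this
  rw [this, smul_eq_mul, Gamma_eq_integral hs, GammaIntegral_eq_mellin]
  simp only [ofReal_exp, ofReal_neg]

theorem mellin_cexp_neg_mul (hs : 0 < s.re) {w : ℂ} (hw : 0 < w.re) :
    mellin (fun t : ℝ => cexp (-(w * t))) s = w ^ (-s) * Gamma s := by
  let U : Set ℂ := {w | 0 < w.re}
  have hU : IsOpen U := isOpen_lt continuous_const continuous_re
  have hmellin : AnalyticOnNhd ℂ (fun w : ℂ => mellin (fun t : ℝ => cexp (-(w * t))) s) U :=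
    DifferentiableOn.analyticOnNhd
      (fun w hw => (differentiableAt_mellin_cexp_neg_mul hs hw).differentiableWithinAt) hU
  have hpow : AnalyticOnNhd ℂ (fun w : ℂ => w ^ (-s) * Gamma s) U :=
    DifferentiableOn.analyticOnNhd (fun w hw =>
      ((differentiableAt_id.cpow_const (Or.inl hw)).mul_const _).differentiableWithinAt) hU
  have hofReal : Tendsto (fun r : ℝ => (r : ℂ)) (𝓝[≠] 1) (𝓝[≠] 1) :=
    tendsto_nhdsWithin_of_tendsto_nhds_of_eventually_within _
      (by simpa using (continuous_ofReal.tendsto 1).mono_left nhdsWithin_le_nhds)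
      (eventually_nhdsWithin_of_forall fun r hr => by simpa using hr)
  have hreal : ∀ᶠ r : ℝ in 𝓝[≠] 1,
      mellin (fun t : ℝ => cexp (-(r * t))) s = (r : ℂ) ^ (-s) * Gamma s :=
    eventually_nhdsWithin_of_eventually_nhds
      ((lt_mem_nhds one_pos).mono fun r hr => mellin_cexp_neg_ofReal_mul hs hr)
  exact hmellin.eqOn_of_preconnected_of_frequently_eq hpow
    (convex_halfSpace_re_gt 0).isPreconnected (by simp [U]) (hofReal.frequently hreal.frequently) hw

theorem mellin_cexp_neg_mul_rpow (hs : 0 < s.re) {w : ℂ} (hw : 0 < w.re) {β : ℝ} (hβ : 0 < β) :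
    mellin (fun t : ℝ => cexp (-(w * ↑(t ^ β)))) s = β⁻¹ * (w ^ (-(s / β)) * Gamma (s / β)) := by
  rw [mellin_comp_rpow (fun u : ℝ => cexp (-(w * u))) s β, abs_of_pos hβ,
    mellin_cexp_neg_mul (by rw [div_ofReal_re]; positivity) hw, real_smul, ofReal_inv]

end MellinCexp

lemma mellin_natCast_add_one (g : ℝ → ℂ) (n : ℕ) :
    mellin g (n + 1) = ∫ t : ℝ in Ioi 0, (t : ℂ) ^ n * g t := by
  simp [mellin]

theorem hasSum_mellin_integral_cexp_neg_mul {g : ℝ → ℂ} {l : ℂ}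
    (hg : AEStronglyMeasurable g (volume.restrict (Ioi 0)))
    (hint : IntegrableOn (fun t => Real.exp (‖l‖ * t) * ‖g t‖) (Ioi 0)) :
    HasSum (fun n : ℕ => (-l) ^ n / n ! * mellin g (n + 1))
      (∫ t : ℝ in Ioi 0, cexp (-l * t) * g t) := by
  simp_rw [mellin_natCast_add_one, ← integral_const_mul]
  have hexp (t : ℝ) : HasSum (fun n : ℕ => (‖l‖ * t) ^ n / n ! * ‖g t‖)
      (Real.exp (‖l‖ * t) * ‖g t‖) := by
    have := (NormedSpace.expSeries_div_hasSum_exp (‖l‖ * t)).mul_right ‖g t‖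
    rwa [← Real.exp_eq_exp_ℝ] at this
  refine hasSum_integral_of_dominated_convergence (fun n t => (‖l‖ * t) ^ n / n ! * ‖g t‖)
    (fun n => by fun_prop) (fun n => ?_) (.of_forall fun t => (hexp t).summable)
    (hint.congr_fun (fun t _ => (hexp t).tsum_eq.symm) measurableSet_Ioi)
    (.of_forall fun t => ?_)
  · filter_upwards [ae_restrict_mem measurableSet_Ioi] with t (ht : 0 < t)
    refine le_of_eq ?_
    simp only [norm_mul, norm_div, norm_pow, norm_neg, RCLike.norm_natCast, norm_real,
      Real.norm_eq_abs, abs_of_pos ht, mul_pow]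
    ring
  · have := (NormedSpace.expSeries_div_hasSum_exp (-l * t)).mul_right (g t)
    rw [← exp_eq_exp_ℂ] at this
    have hterm : (fun n : ℕ => (-l) ^ n / n ! * ((t : ℂ) ^ n * g t)) =
        fun n => (-l * t) ^ n / n ! * g t := funext fun n => by ring
    rwa [hterm]

lemma integrableOn_exp_mul_sub_mul_rpow {β γ : ℝ} (hβ : 1 < β) (hγ : 0 < γ) (R : ℝ) :
    IntegrableOn (fun t : ℝ => Real.exp (R * t - γ * t ^ β)) (Ioi 0) := by
  refine integrable_of_isBigO_exp_neg one_pos (by fun_prop (disch := positivity)) ?_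
  refine Real.isBigO_exp_comp_exp_comp.mpr (Tendsto.isBoundedUnder_le_atBot ?_)
  have : Tendsto (fun t : ℝ => t * (γ * t ^ (β - 1) - (R + 1))) atTop atTop :=
    tendsto_id.atTop_mul_atTop₀ (tendsto_atTop_add_const_right _ _
      ((tendsto_rpow_atTop (by linarith)).const_mul_atTop hγ))
  refine (tendsto_neg_atTop_atBot.comp this).congr' ?_
  filter_upwards [eventually_gt_atTop 0] with t ht
  simp only [Function.comp, Pi.sub_apply]
  rw [Real.rpow_sub_one ht.ne']
  field_simp
  ring

lemma integrableOn_exp_mul_mul_norm_cexp_neg_mul_rpow {β : ℝ} (hβ : 1 < β) {w : ℂ}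
    (hw : 0 < w.re) (R : ℝ) :
    IntegrableOn (fun t : ℝ => Real.exp (R * t) * ‖cexp (-(w * ↑(t ^ β)))‖) (Ioi 0) := by
  refine (integrableOn_exp_mul_sub_mul_rpow hβ hw R).congr_fun (fun t _ => ?_) measurableSet_Ioi
  rw [norm_exp, ← Real.exp_add]
  simp [sub_eq_add_neg]

lemma cexp_cpow {z : ℂ} (h₁ : -π < z.im) (h₂ : z.im ≤ π) (s : ℂ) : cexp z ^ s = cexp (z * s) := by
  rw [cpow_def_of_ne_zero (exp_ne_zero z), log_exp h₁ h₂]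

section FaRate

variable {α : ℝ}

noncomputable def FaRate (α : ℝ) : ℂ := cexp (((α - 2) * π / 2 : ℝ) * I - Real.log (1 + α))

lemma FaRate_eq (hα : -1 < α) : FaRate α = -cexp (I * π * α / 2) / (1 + α) := by
  have hphase : (((α - 2) * π / 2 : ℝ) : ℂ) * I = I * π * α / 2 - π * I := by push_cast; ring
  rw [FaRate, hphase, exp_sub, exp_sub, exp_pi_mul_I, ← ofReal_exp, Real.exp_log (by linarith)]
  push_cast
  field_simp

lemma Fa_eq_integral (hα : -1 < α) (l : ℂ) :
    Fa α l = ∫ t : ℝ in Ioi 0, cexp (-l * t) * cexp (-(FaRate α * ↑(t ^ (1 + α)))) := by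
  simp only [Fa, FaRate_eq hα]
  congr with t
  ring_nf

lemma abs_sub_two_mul_pi_div_two_lt (hα₁ : 1 < α) (hα₂ : α < 3) :
    |(α - 2) * π / 2| < π / 2 := by
  rw [abs_lt]
  constructor <;> nlinarith [Real.pi_pos]

lemma re_FaRate_pos (hα₁ : 1 < α) (hα₂ : α < 3) : 0 < (FaRate α).re := by
  rw [FaRate, exp_re]
  refine mul_pos (Real.exp_pos _) (Real.cos_pos_of_mem_Ioo ?_)
  simpa [← abs_lt] using abs_sub_two_mul_pi_div_two_lt hα₁ hα₂

lemma mellin_cexp_neg_FaRate_mul_rpow (hα₁ : 1 < α) (hα₂ : α < 3) (n : ℕ) :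
    mellin (fun t : ℝ => cexp (-(FaRate α * ↑(t ^ (1 + α))))) (n + 1) =
      1 / (1 + (α : ℂ)) * (Real.Gamma (((n : ℝ) + 1) / (α + 1)) : ℂ) *
        cexp (I * π * (2 - α) * ((n : ℝ) + 1) / (2 * (α + 1))) *
        (((1 + α) ^ (((n : ℝ) + 1) / (α + 1)) : ℝ) : ℂ) := by
  have hβ : 0 < 1 + α := by linarith
  have harg := abs_lt.mp (abs_sub_two_mul_pi_div_two_lt hα₁ hα₂)
  have him : ((((α - 2) * π / 2 : ℝ) : ℂ) * I - Real.log (1 + α)).im = (α - 2) * π / 2 := by simp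
  set q : ℝ := ((n : ℝ) + 1) / (α + 1) with hq
  have hqc : ((n : ℂ) + 1) / ↑(1 + α) = q := by rw [hq]; push_cast; ring
  have hpow : FaRate α ^ (-(q : ℂ)) =
      cexp (I * π * (2 - α) * ((n : ℝ) + 1) / (2 * (α + 1))) * cexp ↑(Real.log (1 + α) * q) := by
    rw [FaRate, cexp_cpow (by rw [him]; linarith) (by rw [him]; linarith), ← exp_add, hq]
    push_cast
    congr 1
    rw [← div_div]
    ring
  rw [mellin_cexp_neg_mul_rpow (by rw [add_re, natCast_re, one_re]; positivity) (re_FaRate_pos hα₁ hα₂) hβ, hqc, hpow,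
    Gamma_ofReal, Real.rpow_def_of_pos hβ, ofReal_exp]
  push_cast
  ring

end FaRate

/-- For `1 < α < 2` and every `λ ∈ ℂ`,
`F_α(λ) = (1/(1+α)) Σ_{n≥0} ((−1)^n/n!) λ^n Γ((n+1)/(α+1)) e^{iπ(2−α)(n+1)/(2(α+1))} (1+α)^{(n+1)/(α+1)}`,
the series converging for every `λ`. -/
theorem Fa_series (α : ℝ) (hα₁ : 1 < α) (hα₂ : α < 2) (l : ℂ) :
    HasSum
      (fun n : ℕ =>
        (1 / (1 + (α : ℂ))) * ((-1 : ℂ) ^ n / n.factorial) * l ^ n *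
          (Real.Gamma (((n : ℝ) + 1) / (α + 1)) : ℂ) *
          Complex.exp (Complex.I * Real.pi * (2 - α) * ((n : ℝ) + 1) / (2 * (α + 1))) *
          (((1 + α) ^ (((n : ℝ) + 1) / (α + 1)) : ℝ) : ℂ))
      (Fa α l) := by
  rw [Fa_eq_integral (by linarith)]
  convert hasSum_mellin_integral_cexp_neg_mul (by fun_prop)
    (integrableOn_exp_mul_mul_norm_cexp_neg_mul_rpow (β := 1 + α) (by linarith)
      (re_FaRate_pos hα₁ (by linarith)) ‖l‖) using 1
  funext n
  rw [mellin_cexp_neg_FaRate_mul_rpow hα₁ (by linarith), neg_pow]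
  ring
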